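/- Let A be a d×d complex matrix. Then the polar of the numerical range W(A) is rigidly convex of degree at most d: explicitly, writing A = H + iK with H, K hermitian, the polar W(A)_* is a convex set equal to the closure of the connected component containing the origin of {(ξ, η) ∈ ℝ² : q(ξ, η) > 0}, where q(ξ, η) = det(I − ξH − ηK) is a real zero polynomial of degree at most d with q(0,0) = 1. -/

import Mathlib

/-!
Since `⟨Hx, x⟩` and `⟨Kx, x⟩` are real, `Re (z̄ ⟨Ax, x⟩) = Re z ⟨Hx, x⟩ + Im z ⟨Kx, x⟩`, so `z`
lies in the polar of `W(A)` iff the pencil `I - (Re z) H - (Im z) K` is positive semidefinite.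
The set `P` where the pencil is positive definite is open (compactness of the unit sphere),
convex and contains `0`; it lies in `{det > 0}` and is relatively closed there, because a
positive semidefinite matrix with nonzero determinant is positive definite. Hence `P` is the
connected component of `0` in `{det > 0}`, and its closure is the spectrahedron.
The determinant `det (I - ξ H - η K)` has degree at most `d` and real coefficients, since
conjugating its coefficients transposes the pencil; and `det (I - μ N) = 0` with `N` hermitian
makes `1 / μ` an eigenvalue of `N`, hence real.
-/

open Matrix
open scoped ComplexOrder

/-- The numerical range of a `d × d` complex matrix `A`. -/
def numericalRange {d : ℕ} (A : Matrix (Fin d) (Fin d) ℂ) : Set ℂ :=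
  {z | ∃ x : Fin d → ℂ, star x ⬝ᵥ x = 1 ∧ star x ⬝ᵥ A.mulVec x = z}

/-- The polar of a subset of `ℂ` (identifying `ℂ` with `ℝ²`). -/
def polarSet (S : Set ℂ) : Set ℂ :=
  {z | ∀ w ∈ S, ((starRingEnd ℂ) z * w).re ≤ 1}

/-- A real polynomial in two variables is a real zero (RZ) polynomial if it is
positive at the origin and for every `(x, y) ∈ ℝ²` and `μ ∈ ℂ`,
`q(μx, μy) = 0` implies `μ ∈ ℝ`. -/
def IsRZPolynomial (q : MvPolynomial (Fin 2) ℝ) : Prop :=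
  0 < MvPolynomial.eval ![0, 0] q ∧
  ∀ (x y : ℝ) (μ : ℂ),
    MvPolynomial.eval ![μ * (x : ℂ), μ * (y : ℂ)]
      (MvPolynomial.map (algebraMap ℝ ℂ) q) = 0 → μ.im = 0

open MvPolynomial Topology

lemma IsCompact.isOpen_setOf_forall_pos {X Y : Type*} [TopologicalSpace X] [TopologicalSpace Y]
    {K : Set Y} (hK : IsCompact K) {f : X → Y → ℝ} (hf : Continuous (Function.uncurry f)) :
    IsOpen {x | ∀ y ∈ K, 0 < f x y} :=
  isOpen_iff_eventually.2 fun _ hx => hK.eventually_forall_of_forall_eventually fun y hy =>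
    (hf.tendsto _).eventually (lt_mem_nhds (hx y hy))

lemma connectedComponentIn_eq_of_isOpen {X : Type*} [TopologicalSpace X] {P U : Set X} {x : X}
    (hPo : IsOpen P) (hPc : IsPreconnected P) (hx : x ∈ P) (hPU : P ⊆ U)
    (hcl : closure P ∩ U ⊆ P) : connectedComponentIn U x = P :=
  subset_antisymm
    (isPreconnected_connectedComponentIn.subset_of_closure_inter_subset hPo
      ⟨x, mem_connectedComponentIn (hPU hx), hx⟩
      fun _ hy => hcl ⟨hy.1, connectedComponentIn_subset _ _ hy.2⟩)
    (hPc.subset_connectedComponentIn hx hPU)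

namespace Matrix

variable {n : Type*} [Fintype n] {N : Matrix n n ℂ}

lemma IsHermitian.im_star_dotProduct_mulVec_self_eq_zero (hN : N.IsHermitian) (x : n → ℂ) :
    (star x ⬝ᵥ N *ᵥ x).im = 0 :=
  hN.im_star_dotProduct_mulVec_self x

lemma IsHermitian.posSemidef_iff_re_nonneg (hN : N.IsHermitian) :
    N.PosSemidef ↔ ∀ x, 0 ≤ (star x ⬝ᵥ N *ᵥ x).re := by
  simp [posSemidef_iff_dotProduct_mulVec, hN, Complex.le_def,
    hN.im_star_dotProduct_mulVec_self_eq_zero]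

lemma IsHermitian.posDef_iff_re_pos (hN : N.IsHermitian) :
    N.PosDef ↔ ∀ x, x ≠ 0 → 0 < (star x ⬝ᵥ N *ᵥ x).re := by
  simp [posDef_iff_dotProduct_mulVec, hN, Complex.lt_def,
    hN.im_star_dotProduct_mulVec_self_eq_zero]

lemma star_smul_dotProduct_smul (c : ℂ) (x y : n → ℂ) :
    star (c • x) ⬝ᵥ (c • y) = Complex.normSq c * (star x ⬝ᵥ y) := by
  rw [star_smul, smul_dotProduct, dotProduct_smul, smul_smul,
    Complex.normSq_eq_conj_mul_self, smul_eq_mul, Complex.star_def]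

lemma re_star_smul_dotProduct_mulVec_smul (N : Matrix n n ℂ) (c : ℂ) (x : n → ℂ) :
    (star (c • x) ⬝ᵥ N *ᵥ (c • x)).re = Complex.normSq c * (star x ⬝ᵥ N *ᵥ x).re := by
  rw [mulVec_smul, star_smul_dotProduct_smul, Complex.re_ofReal_mul]

lemma exists_smul_star_dotProduct_self_eq_one {x : n → ℂ} (hx : x ≠ 0) :
    ∃ c : ℂ, c ≠ 0 ∧ star (c • x) ⬝ᵥ (c • x) = 1 := by
  obtain ⟨r, hr, hrx⟩ := RCLike.pos_iff_exists_ofReal.mp (dotProduct_star_self_pos_iff.mpr hx)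
  refine ⟨((Real.sqrt r)⁻¹ : ℝ), by simp [(Real.sqrt_pos.mpr hr).ne'], ?_⟩
  rw [star_smul_dotProduct_smul, ← hrx, Complex.normSq_ofReal, ← sq, inv_pow, Real.sq_sqrt hr.le]
  simp [hr.ne']

lemma IsHermitian.posDef_iff_forall_mem_sphere (hN : N.IsHermitian) :
    N.PosDef ↔ ∀ x ∈ Metric.sphere (0 : n → ℂ) 1, 0 < (star x ⬝ᵥ N *ᵥ x).re := by
  rw [hN.posDef_iff_re_pos]
  refine ⟨fun h x hx => h x (ne_zero_of_mem_unit_sphere ⟨x, hx⟩), fun h x hx => ?_⟩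
  have hu : ((‖x‖⁻¹ : ℝ) : ℂ) • x ∈ Metric.sphere (0 : n → ℂ) 1 := by
    simp [norm_smul, hx]
  have := h _ hu
  rw [re_star_smul_dotProduct_mulVec_smul] at this
  exact pos_of_mul_pos_right this (Complex.normSq_nonneg _)

lemma IsHermitian.posSemidef_one_sub_iff [DecidableEq n] (hN : N.IsHermitian) :
    (1 - N).PosSemidef ↔ ∀ x, star x ⬝ᵥ x = 1 → (star x ⬝ᵥ N *ᵥ x).re ≤ 1 := by
  have hform : ∀ x : n → ℂ, (star x ⬝ᵥ (1 - N) *ᵥ x).re =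
      (star x ⬝ᵥ x).re - (star x ⬝ᵥ N *ᵥ x).re := fun x => by
    rw [sub_mulVec, one_mulVec, dotProduct_sub, Complex.sub_re]
  rw [(isHermitian_one.sub hN).posSemidef_iff_re_nonneg]
  refine ⟨fun h x hx => by simpa [hform, hx] using h x, fun h x => ?_⟩
  rcases eq_or_ne x 0 with rfl | hx
  · simp
  obtain ⟨c, hc, hcx⟩ := exists_smul_star_dotProduct_self_eq_one hx
  have hcx' := hform (c • x)
  rw [re_star_smul_dotProduct_mulVec_smul, hcx, Complex.one_re] at hcx'
  exact nonneg_of_mul_nonneg_right (hcx' ▸ sub_nonneg.mpr (h _ hcx)) (Complex.normSq_pos.mpr hc)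

lemma IsHermitian.im_eq_zero_of_det_one_sub_smul_eq_zero [DecidableEq n] (hN : N.IsHermitian)
    {μ : ℂ} (h : (1 - μ • N).det = 0) : μ.im = 0 := by
  obtain ⟨v, hv, hμv⟩ := exists_mulVec_eq_zero_iff.mpr h
  rw [sub_mulVec, one_mulVec, smul_mulVec, sub_eq_zero] at hμv
  obtain ⟨r, hr, hrv⟩ := RCLike.pos_iff_exists_ofReal.mp (dotProduct_star_self_pos_iff.mpr hv)
  set b := star v ⬝ᵥ N *ᵥ v
  have hb : b.im = 0 := hN.im_star_dotProduct_mulVec_self_eq_zero v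
  have hrb : (r : ℂ) = μ * b := by
    rw [← smul_eq_mul, ← dotProduct_smul, ← hμv]
    exact hrv
  have hre : r = μ.re * b.re := by simpa [hb] using congrArg Complex.re hrb
  have him : 0 = μ.im * b.re := by simpa [hb] using congrArg Complex.im hrb
  have hb0 : b.re ≠ 0 := fun h0 => hr.ne' (by rw [hre, h0, mul_zero])
  exact (mul_eq_zero.mp him.symm).resolve_right hb0

end Matrix

section Spectrahedron

variable {E n : Type*} [AddCommGroup E] [Module ℝ E] [TopologicalSpace E] [DecidableEq n]
  (L : E →L[ℝ] Matrix n n ℂ)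

lemma continuous_re_star_dotProduct_one_sub_mulVec [Fintype n] :
    Continuous fun p : E × (n → ℂ) => (star p.2 ⬝ᵥ (1 - L p.1) *ᵥ p.2).re :=
  Complex.continuous_re.comp <| continuous_snd.star.dotProduct <|
    (continuous_const.sub (L.continuous.comp continuous_fst)).matrix_mulVec continuous_snd

lemma isOpen_setOf_posDef_one_sub [Fintype n] (hL : ∀ z, (L z).IsHermitian) :
    IsOpen {z | (1 - L z).PosDef} := by
  have h : {z | (1 - L z).PosDef} =
      {z | ∀ x ∈ Metric.sphere (0 : n → ℂ) 1, 0 < (star x ⬝ᵥ (1 - L z) *ᵥ x).re} := by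
    ext z
    exact (isHermitian_one.sub (hL z)).posDef_iff_forall_mem_sphere
  rw [h]
  exact (isCompact_sphere _ _).isOpen_setOf_forall_pos
    (continuous_re_star_dotProduct_one_sub_mulVec L)

lemma isClosed_setOf_posSemidef_one_sub [Fintype n] (hL : ∀ z, (L z).IsHermitian) :
    IsClosed {z | (1 - L z).PosSemidef} := by
  have h : {z | (1 - L z).PosSemidef} =
      ⋂ x : n → ℂ, {z | 0 ≤ (star x ⬝ᵥ (1 - L z) *ᵥ x).re} := by
    ext z
    simp [(isHermitian_one.sub (hL z)).posSemidef_iff_re_nonneg]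
  rw [h]
  exact isClosed_iInter fun x => isClosed_le continuous_const <|
    (continuous_re_star_dotProduct_one_sub_mulVec L).comp (.prodMk_left x)

lemma convex_setOf_posDef_one_sub : Convex ℝ {z | (1 - L z).PosDef} := by
  refine convex_iff_forall_pos.2 fun z₁ h₁ z₂ h₂ a b ha hb hab => ?_
  have h : 1 - L (a • z₁ + b • z₂) = a • (1 - L z₁) + b • (1 - L z₂) := by
    rw [map_add, map_smul, map_smul]
    linear_combination (norm := module) -hab • (1 : Matrix n n ℂ)
  show (1 - L _).PosDef
  rw [h]
  exact (h₁.smul ha).add (h₂.smul hb)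

lemma closure_setOf_posDef_one_sub [Fintype n] [ContinuousSMul ℝ E]
    (hL : ∀ z, (L z).IsHermitian) :
    closure {z | (1 - L z).PosDef} = {z | (1 - L z).PosSemidef} := by
  refine subset_antisymm (closure_minimal (fun z hz => hz.posSemidef)
    (isClosed_setOf_posSemidef_one_sub L hL)) fun z hz => ?_
  have hlim : Filter.Tendsto (fun t : ℝ => t • z) (𝓝[<] 1) (𝓝 z) := by
    simpa using (continuousWithinAt_id (x := (1 : ℝ)) (s := Set.Iio 1)).tendsto.smul_const z
  refine mem_closure_of_tendsto hlim ?_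
  filter_upwards [Ioo_mem_nhdsLT zero_lt_one] with t ht
  have h : 1 - L (t • z) = (1 - t) • (1 : Matrix n n ℂ) + t • (1 - L z) := by
    rw [map_smul]
    module
  show (1 - L _).PosDef
  rw [h]
  exact (PosDef.one.smul (sub_pos.mpr ht.2)).add_posSemidef (hz.smul ht.1.le)

theorem closure_connectedComponentIn_setOf_re_det_pos [Fintype n] [IsTopologicalAddGroup E]
    [ContinuousSMul ℝ E] (hL : ∀ z, (L z).IsHermitian) :
    closure (connectedComponentIn {z | 0 < (1 - L z).det.re} 0) =
      {z | (1 - L z).PosSemidef} := by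
  have hP : connectedComponentIn {z | 0 < (1 - L z).det.re} 0 = {z | (1 - L z).PosDef} := by
    refine connectedComponentIn_eq_of_isOpen (isOpen_setOf_posDef_one_sub L hL)
      (convex_setOf_posDef_one_sub L).isPreconnected (by simpa using PosDef.one)
      (fun z hz => by simpa using (Complex.lt_def.mp hz.det_pos).1) ?_
    rintro z ⟨hzP, hzU⟩
    rw [closure_setOf_posDef_one_sub L hL] at hzP
    exact hzP.posDef_iff_det_ne_zero.mpr fun h => by simp [h] at hzU
  rw [hP, closure_setOf_posDef_one_sub L hL]

end Spectrahedron

lemma convex_polarSet (S : Set ℂ) : Convex ℝ (polarSet S) := by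
  simp only [polarSet, Set.ofPred_forall]
  refine convex_iInter₂ fun w _ => convex_halfSpace_le ⟨fun z₁ z₂ => ?_, fun r z => ?_⟩ 1
  · simp [add_mul]
  · simp [Complex.mul_re]
    ring

namespace Matrix

variable {n : Type*} {H K : Matrix n n ℂ}

noncomputable def linearPencil (H K : Matrix n n ℂ) : ℂ →L[ℝ] Matrix n n ℂ :=
  Complex.reCLM.smulRight H + Complex.imCLM.smulRight K

@[simp]
lemma linearPencil_apply (z : ℂ) : linearPencil H K z = z.re • H + z.im • K := rfl

lemma isHermitian_linearPencil (hH : H.IsHermitian) (hK : K.IsHermitian) (z : ℂ) :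
    (linearPencil H K z).IsHermitian :=
  (hH.smul (.all _)).add (hK.smul (.all _))

lemma re_conj_mul_star_dotProduct_mulVec [Fintype n] (hH : H.IsHermitian) (hK : K.IsHermitian)
    (z : ℂ) (x : n → ℂ) :
    ((starRingEnd ℂ) z * (star x ⬝ᵥ (H + Complex.I • K) *ᵥ x)).re =
      (star x ⬝ᵥ linearPencil H K z *ᵥ x).re := by
  simp [add_mulVec, smul_mulVec, Complex.mul_re, hH.im_star_dotProduct_mulVec_self_eq_zero,
    hK.im_star_dotProduct_mulVec_self_eq_zero]

end Matrix

lemma polarSet_numericalRange_eq {d : ℕ} {H K : Matrix (Fin d) (Fin d) ℂ} (hH : H.IsHermitian)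
    (hK : K.IsHermitian) :
    polarSet (numericalRange (H + Complex.I • K)) = {z | (1 - linearPencil H K z).PosSemidef} := by
  ext z
  simp only [polarSet, numericalRange, Set.mem_ofPred_eq, forall_exists_index, and_imp,
    forall_apply_eq_imp_iff₂, re_conj_mul_star_dotProduct_mulVec hH hK,
    (isHermitian_linearPencil hH hK z).posSemidef_one_sub_iff]

namespace MvPolynomial

variable {σ R : Type*}

lemma totalDegree_map_of_injective [CommSemiring R] {S : Type*} [CommSemiring S] {f : R →+* S}
    (hf : Function.Injective f) (p : MvPolynomial σ R) :
    (map f p).totalDegree = p.totalDegree := by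
  simp [totalDegree, support_map_of_injective _ hf]

lemma exists_map_algebraMap_eq_of_map_conj_eq {p : MvPolynomial σ ℂ}
    (hp : map (starRingEnd ℂ) p = p) : ∃ q : MvPolynomial σ ℝ, map (algebraMap ℝ ℂ) q = p :=
  mem_range_map_iff_coeffs_subset.mpr fun c hc => by
    obtain ⟨m, -, rfl⟩ := mem_coeffs_iff.mp hc
    exact ⟨_, Complex.conj_eq_iff_re.mp (by rw [← coeff_map, hp])⟩

lemma totalDegree_det_le [CommRing R] {n : Type*} [Fintype n] [DecidableEq n]
    {M : Matrix n n (MvPolynomial σ R)} {k : ℕ} (h : ∀ i j, (M i j).totalDegree ≤ k) :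
    M.det.totalDegree ≤ Fintype.card n * k := by
  rw [det_apply]
  refine totalDegree_finsetSum_le fun e _ => (totalDegree_smul_le _ _).trans ?_
  exact (totalDegree_finsetProd _ _).trans <|
    (Finset.sum_le_sum fun i _ => h (e i) i).trans (by simp)

end MvPolynomial

namespace Matrix

variable {n : Type*} [Fintype n] [DecidableEq n]

noncomputable def detPencilPolynomial (H K : Matrix n n ℂ) : MvPolynomial (Fin 2) ℂ :=
  ((1 : Matrix n n (MvPolynomial (Fin 2) ℂ)) - (X 0 : MvPolynomial (Fin 2) ℂ) • H.map C -
    (X 1 : MvPolynomial (Fin 2) ℂ) • K.map C).det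

lemma eval_detPencilPolynomial (H K : Matrix n n ℂ) (v : Fin 2 → ℂ) :
    eval v (detPencilPolynomial H K) = (1 - v 0 • H - v 1 • K).det := by
  rw [detPencilPolynomial, RingHom.map_det]
  congr 1
  ext i j
  simp [one_apply, apply_ite]

lemma map_conj_detPencilPolynomial {H K : Matrix n n ℂ} (hH : H.IsHermitian)
    (hK : K.IsHermitian) :
    MvPolynomial.map (starRingEnd ℂ) (detPencilPolynomial H K) = detPencilPolynomial H K := by
  rw [detPencilPolynomial, RingHom.map_det, ← det_transpose]
  congr 1
  ext i j
  simp [one_apply, apply_ite, eq_comm, ← hH.apply i j, ← hK.apply i j]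

lemma totalDegree_detPencilPolynomial_le (H K : Matrix n n ℂ) :
    (detPencilPolynomial H K).totalDegree ≤ Fintype.card n := by
  refine (totalDegree_det_le (k := 1) fun i j => ?_).trans_eq (mul_one _)
  simp only [sub_apply, smul_apply, map_apply, one_apply, smul_eq_mul]
  refine (totalDegree_sub _ _).trans (max_le ((totalDegree_sub _ _).trans (max_le ?_ ?_)) ?_)
  · split_ifs <;> simp
  all_goals exact (totalDegree_mul _ _).trans (by simp)

variable {H K : Matrix n n ℂ} {q : MvPolynomial (Fin 2) ℝ}

lemma ofReal_eval_of_map_eq_detPencilPolynomial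
    (hq : MvPolynomial.map (algebraMap ℝ ℂ) q = detPencilPolynomial H K) (ξ η : ℝ) :
    ((eval ![ξ, η] q : ℝ) : ℂ) = (1 - (ξ : ℂ) • H - (η : ℂ) • K).det := by
  have h := eval₂_comp (algebraMap ℝ ℂ) ![ξ, η] q
  rw [← eval_map, hq, eval_detPencilPolynomial] at h
  simpa using h

lemma eval_eq_re_det_of_map_eq_detPencilPolynomial
    (hq : MvPolynomial.map (algebraMap ℝ ℂ) q = detPencilPolynomial H K) (z : ℂ) :
    eval ![z.re, z.im] q = (1 - linearPencil H K z).det.re := by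
  rw [← Complex.ofReal_re (eval _ q), ofReal_eval_of_map_eq_detPencilPolynomial hq,
    linearPencil_apply, sub_add_eq_sub_sub, Complex.coe_smul, Complex.coe_smul]

lemma eval_zero_of_map_eq_detPencilPolynomial
    (hq : MvPolynomial.map (algebraMap ℝ ℂ) q = detPencilPolynomial H K) :
    eval ![0, 0] q = 1 := by
  simpa using ofReal_eval_of_map_eq_detPencilPolynomial hq 0 0

lemma isRZPolynomial_of_map_eq_detPencilPolynomial (hH : H.IsHermitian) (hK : K.IsHermitian)
    (hq : MvPolynomial.map (algebraMap ℝ ℂ) q = detPencilPolynomial H K) : IsRZPolynomial q := by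
  refine ⟨(eval_zero_of_map_eq_detPencilPolynomial hq).symm ▸ one_pos, fun x y μ h => ?_⟩
  rw [hq, eval_detPencilPolynomial] at h
  refine (isHermitian_linearPencil hH hK ⟨x, y⟩).im_eq_zero_of_det_one_sub_smul_eq_zero ?_
  convert h using 2
  simp only [linearPencil_apply, smul_add, sub_sub, cons_val_zero, cons_val_one]
  module

end Matrix

/-- The polar of the numerical range of `A = H + iK` is rigidly convex of degree
at most `d`: it is convex and is the closure of the connected component of the
origin of `{q > 0}`, where `q(ξ, η) = det(I - ξH - ηK)` is an RZ polynomial of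
degree at most `d` with `q(0,0) = 1`. -/
theorem polar_numericalRange_rigidlyConvex {d : ℕ} (A H K : Matrix (Fin d) (Fin d) ℂ)
    (hH : H.IsHermitian) (hK : K.IsHermitian) (hA : A = H + Complex.I • K) :
    Convex ℝ (polarSet (numericalRange A)) ∧
    ∃ q : MvPolynomial (Fin 2) ℝ,
      (∀ ξ η : ℝ, ((MvPolynomial.eval ![ξ, η] q : ℝ) : ℂ) =
        ((1 : Matrix (Fin d) (Fin d) ℂ) - (ξ : ℂ) • H - (η : ℂ) • K).det) ∧
      IsRZPolynomial q ∧
      q.totalDegree ≤ d ∧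
      MvPolynomial.eval ![0, 0] q = 1 ∧
      polarSet (numericalRange A) =
        closure (connectedComponentIn
          {z : ℂ | 0 < MvPolynomial.eval ![z.re, z.im] q} 0) := by
  obtain ⟨q, hq⟩ := exists_map_algebraMap_eq_of_map_conj_eq (map_conj_detPencilPolynomial hH hK)
  refine ⟨convex_polarSet _, q, ofReal_eval_of_map_eq_detPencilPolynomial hq,
    isRZPolynomial_of_map_eq_detPencilPolynomial hH hK hq, ?_,
    eval_zero_of_map_eq_detPencilPolynomial hq, ?_⟩
  · rw [← totalDegree_map_of_injective (algebraMap ℝ ℂ).injective, hq]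
    simpa using totalDegree_detPencilPolynomial_le H K
  · rw [hA, polarSet_numericalRange_eq hH hK,
      ← closure_connectedComponentIn_setOf_re_det_pos _ (isHermitian_linearPencil hH hK)]
    simp_rw [eval_eq_re_det_of_map_eq_detPencilPolynomial hq]
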